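/- Let α₁ = (0 2)(1 3)(4 9)(5 11)(6 8)(7 10) and α₂ = (0 4)(2 9)(5 6)(7 10)(8 11) be permutations of {0,…,11}. Then α₁ and α₂ commute, each has order 2, α₁ ≠ α₂, and the subgroup they generate has exactly 4 elements and is isomorphic to ℤ/2 × ℤ/2. -/

import Mathlib

open Equiv

/-- α₁ = (0 2)(1 3)(4 9)(5 11)(6 8)(7 10) -/
def ko2Alpha1 : Equiv.Perm (Fin 12) :=
  swap 0 2 * swap 1 3 * swap 4 9 * swap 5 11 * swap 6 8 * swap 7 10

/-- α₂ = (0 4)(2 9)(5 6)(7 10)(8 11) -/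
def ko2Alpha2 : Equiv.Perm (Fin 12) :=
  swap 0 4 * swap 2 9 * swap 5 6 * swap 7 10 * swap 8 11

/-!
Two distinct commuting involutions `a`, `b` generate `{1, a, b, ab}`: these four elements are
distinct and all square to `1`, so the generated group is a Klein four-group.
-/

namespace Subgroup

variable {G : Type*} [Group G] {a b : G}

theorem coe_closure_pair_of_commute (hab : Commute a b) (ha : a ^ 2 = 1) (hb : b ^ 2 = 1) :
    (closure {a, b} : Set G) = {1, a, b, a * b} := by
  rw [sq] at ha hb
  have ha' : a⁻¹ = a := inv_eq_of_mul_eq_one_right ha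
  have hb' : b⁻¹ = b := inv_eq_of_mul_eq_one_right hb
  have haab : a * (a * b) = b := by rw [← mul_assoc, ha, one_mul]
  have hbab : b * (a * b) = a := by rw [← mul_assoc, ← hab.eq, mul_assoc, hb, mul_one]
  have closed_mul_left : ∀ x ∈ ({a, b} : Set G), ∀ y ∈ ({1, a, b, a * b} : Set G),
      x * y ∈ ({1, a, b, a * b} : Set G) := by
    rintro x (rfl | rfl) y (rfl | rfl | rfl | rfl) <;>
      simp [ha, hb, haab, hbab, hab.symm.eq]
  apply subset_antisymm
  -- `a` and `b` are their own inverses, so closure under left multiplication by them suffices.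
  · intro x hx
    induction hx using closure_induction_left with
    | one => exact Set.mem_insert 1 _
    | mul_left x hx y _ ih => exact closed_mul_left x hx y ih
    | inv_mul_cancel x hx y _ ih =>
      rw [show x⁻¹ = x by rcases hx with rfl | rfl; exacts [ha', hb']]
      exact closed_mul_left x hx y ih
  · rintro x (rfl | rfl | rfl | rfl)
    · exact one_mem _
    · exact subset_closure (.inl rfl)
    · exact subset_closure (.inr rfl)
    · exact mul_mem (subset_closure (.inl rfl)) (subset_closure (.inr rfl))

theorem sq_eq_one_of_mem_closure_pair (hab : Commute a b) (ha : a ^ 2 = 1) (hb : b ^ 2 = 1)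
    {x : G} (hx : x ∈ closure {a, b}) : x ^ 2 = 1 := by
  rw [← SetLike.mem_coe, coe_closure_pair_of_commute hab ha hb] at hx
  rcases hx with rfl | rfl | rfl | rfl
  exacts [one_pow 2, ha, hb, by rw [hab.mul_pow, ha, hb, one_mul]]

theorem isKleinFour_closure_pair (hab : Commute a b) (ha : orderOf a = 2) (hb : orderOf b = 2)
    (hne : a ≠ b) : IsKleinFour (closure {a, b}) := by
  have ha1 : a ≠ 1 := fun h => by simp [h] at ha
  have hb1 : b ≠ 1 := fun h => by simp [h] at hb
  have ha2 : a ^ 2 = 1 := ha ▸ pow_orderOf_eq_one a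
  have hb2 : b ^ 2 = 1 := hb ▸ pow_orderOf_eq_one b
  have hab1 : a * b ≠ 1 := fun h =>
    hne (eq_inv_of_mul_eq_one_left h ▸ inv_eq_of_mul_eq_one_right (sq b ▸ hb2))
  have card_four : Nat.card (closure {a, b}) = 4 := by
    rw [← SetLike.coe_sort_coe, Nat.card_coe_set_eq, coe_closure_pair_of_commute hab ha2 hb2,
      Set.ncard_insert_of_notMem, Set.ncard_insert_of_notMem, Set.ncard_pair]
    all_goals simp_all [eq_comm]
  have : Nontrivial (closure {a, b}) :=
    nontrivial_of_ne ⟨a, subset_closure (.inl rfl)⟩ 1 (Subtype.coe_ne_coe.mp ha1)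
  refine ⟨card_four, (Monoid.exponent_eq_prime_iff Nat.prime_two).mpr fun x hx => ?_⟩
  exact orderOf_eq_prime (Subtype.ext (sq_eq_one_of_mem_closure_pair hab ha2 hb2 x.2)) hx

end Subgroup

theorem stmt16 :
    ko2Alpha1 * ko2Alpha2 = ko2Alpha2 * ko2Alpha1 ∧
    orderOf ko2Alpha1 = 2 ∧ orderOf ko2Alpha2 = 2 ∧ ko2Alpha1 ≠ ko2Alpha2 ∧
    Nat.card (Subgroup.closure ({ko2Alpha1, ko2Alpha2} : Set (Equiv.Perm (Fin 12)))) = 4 ∧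
    Nonempty ((Subgroup.closure ({ko2Alpha1, ko2Alpha2} : Set (Equiv.Perm (Fin 12)))) ≃*
      Multiplicative (ZMod 2 × ZMod 2)) := by
  have hcomm : Commute ko2Alpha1 ko2Alpha2 := show _ = _ by decide
  have h1 : orderOf ko2Alpha1 = 2 := orderOf_eq_prime (by decide) (by decide)
  have h2 : orderOf ko2Alpha2 = 2 := orderOf_eq_prime (by decide) (by decide)
  have hne : ko2Alpha1 ≠ ko2Alpha2 := by decide
  have := Subgroup.isKleinFour_closure_pair hcomm h1 h2 hne
  exact ⟨hcomm.eq, h1, h2, hne, IsKleinFour.card_four, IsKleinFour.nonempty_mulEquiv⟩
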